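/- arXiv:2205.10299 — 9 statements merged into one kernel-verified Lean document; each statement's English description precedes it below -/
import Mathlib

section
/- Let K be a number field of degree 4 over ℚ that is totally complex (K has no real embeddings, i.e. no ring homomorphism K →+* ℝ exists). Suppose y ∈ K satisfies y² = d·1 for some rational number d > 1 that is not a rational square. Then there exist rational numbers p and q with p < 0 and p² − q²·d > 0, and an element x ∈ K with x² = p·1 + q·y, such that the family (1, y, x, x·y) is a basis of K as a ℚ-vector space. -/
/-!
`F = ℚ(y)` is a quadratic subfield, so `K/F` is quadratic and completing the square gives
`x ∉ F` with `x² = p + q y ∈ F`; the products of the bases `(1, y)` of `F/ℚ` and `(1, x)` of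
`K/F` form a `ℚ`-basis of `K`. If `p + q s ≥ 0` for one of the real square roots `s = ±√d`,
then `y ↦ s`, `x ↦ √(p + q s)` extends to a real embedding of `K`. Hence `p ± q √d < 0`, which
is `p < 0` and `p² - q² d > 0`.
-/

open Polynomial IntermediateField

theorem minpoly_eq_X_sq_sub_C {F E : Type*} [Field F] [Ring E] [Algebra F E] [Nontrivial E]
    {x : E} {c : F} (hx : x ∉ (algebraMap F E).range) (hxc : x ^ 2 = algebraMap F E c) :
    minpoly F x = X ^ 2 - C c := by
  have hmonic : (X ^ 2 - C c : F[X]).Monic := monic_X_pow_sub_C c two_ne_zero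
  have hroot : aeval x (X ^ 2 - C c) = 0 := by simp [hxc]
  have hint : IsIntegral F x := ⟨_, hmonic, by rwa [← aeval_def]⟩
  refine (eq_of_monic_of_dvd_of_natDegree_le (minpoly.monic hint) hmonic
    (minpoly.dvd F x hroot) ?_).symm
  rw [natDegree_X_pow_sub_C]
  exact (minpoly.two_le_natDegree_iff hint).mpr hx

theorem linearIndependent_one_of_notMem_range {F E : Type*} [Field F] [Ring E] [Algebra F E]
    [Nontrivial E] {z : E} (hz : z ∉ (algebraMap F E).range) : LinearIndependent F ![1, z] :=
  (LinearIndependent.pair_iff' one_ne_zero).mpr fun a ha ↦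
    hz ⟨a, by rw [Algebra.algebraMap_eq_smul_one, ha]⟩

theorem exists_smul_one_add_smul_eq_of_finrank_eq_two {F E : Type*} [Field F] [Ring E]
    [Algebra F E] [Nontrivial E] (hE : Module.finrank F E = 2) {z : E}
    (hz : z ∉ (algebraMap F E).range) (w : E) : ∃ a b : F, a • 1 + b • z = w := by
  have hspan := (linearIndependent_one_of_notMem_range hz).span_eq_top_of_card_eq_finrank
    (by simp [hE])
  rw [Matrix.range_cons, Matrix.range_cons, Matrix.range_empty, Set.union_empty,
    Set.singleton_union] at hspan
  exact Submodule.mem_span_pair.mp (hspan ▸ Submodule.mem_top)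

theorem exists_notMem_range_sq_mem_range {F E : Type*} [Field F] [Field E] [Algebra F E]
    (h2 : (2 : F) ≠ 0) (hE : Module.finrank F E = 2) :
    ∃ x : E, x ∉ (algebraMap F E).range ∧ x ^ 2 ∈ (algebraMap F E).range := by
  obtain ⟨z, hz⟩ : ∃ z : E, z ∉ (algebraMap F E).range := by
    by_contra! h
    have : (⊥ : IntermediateField F E) = ⊤ := eq_top_iff.mpr fun z _ ↦ mem_bot.mpr (h z)
    rw [← finrank_top', ← this, IntermediateField.finrank_bot] at hE
    exact absurd hE (by norm_num)
  obtain ⟨a, b, hab⟩ := exists_smul_one_add_smul_eq_of_finrank_eq_two hE hz (z ^ 2)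
  refine ⟨z - algebraMap F E (b / 2), fun ⟨t, ht⟩ ↦ hz ⟨t + b / 2, by simp [ht]⟩,
    a + (b / 2) ^ 2, ?_⟩
  have hb : algebraMap F E b = 2 * algebraMap F E (b / 2) := by
    rw [← map_ofNat (algebraMap F E) 2, ← map_mul, mul_div_cancel₀ b h2]
  simp only [Algebra.smul_def, mul_one] at hab
  rw [map_add, map_pow]
  linear_combination hab - z * hb

theorem exists_ringHom_apply_eq_of_sq_eq {F E L : Type*} [Field F] [Field E] [Algebra F E]
    [CommRing L] (hE : Module.finrank F E = 2) {x : E} (hx : x ∉ (algebraMap F E).range)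
    {c : F} (hxc : x ^ 2 = algebraMap F E c) (σ : F →+* L) {r : L} (hr : r ^ 2 = σ c) :
    ∃ τ : E →+* L, τ x = r := by
  let := σ.toAlgebra
  have : FiniteDimensional F E := Module.finite_of_finrank_eq_succ hE
  have hint : IsIntegral F x := .of_finite F x
  have hmin := minpoly_eq_X_sq_sub_C hx hxc
  have htop : F⟮x⟯ = ⊤ := eq_of_le_of_finrank_eq le_top <| by
    rw [adjoin.finrank hint, hmin, natDegree_X_pow_sub_C, finrank_top', hE]
  let pb := PowerBasis.ofAdjoinEqTop hint
    ((adjoin_simple_eq_top_iff_of_isAlgebraic hint.isAlgebraic).mp htop)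
  have hroot : aeval r (minpoly F pb.gen) = 0 := by
    simp [pb, hmin, hr, RingHom.algebraMap_toAlgebra]
  exact ⟨pb.lift r hroot, pb.lift_gen r hroot⟩

theorem linearIndependent_tower_of_notMem_range {F E K : Type*} [Field F] [Field E] [Field K]
    [Algebra F E] [Algebra E K] [Algebra F K] [IsScalarTower F E K]
    {y : E} (hy : y ∉ (algebraMap F E).range) {x : K} (hx : x ∉ (algebraMap E K).range) :
    LinearIndependent F ![1, algebraMap E K y, x, x * algebraMap E K y] := by
  have h := linearIndependent_smul (linearIndependent_one_of_notMem_range hy)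
    (linearIndependent_one_of_notMem_range hx)
  refine (linearIndependent_equiv' (finProdFinEquiv.symm.trans (Equiv.prodComm _ _)) ?_).mpr h
  funext i
  fin_cases i <;> simp [finProdFinEquiv, Fin.divNat, Fin.modNat, Algebra.smul_def, mul_comm]

theorem neg_and_sq_sub_sq_mul_pos_of_forall {p q d : ℝ} (hd : 0 ≤ d)
    (h : ∀ s : ℝ, s ^ 2 = d → p + q * s < 0) : p < 0 ∧ 0 < p ^ 2 - q ^ 2 * d := by
  have hs := Real.sq_sqrt hd
  have h₁ := h √d hs
  have h₂ := h (-√d) (by rwa [neg_sq])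
  exact ⟨by linarith, by nlinarith [mul_pos_of_neg_of_neg h₁ h₂]⟩

/-- Every totally complex quartic number field containing a square root of a
non-square rational `d > 1` has the form `ℚ[x,y]/(y²-d, x²-p-qy)` with `p < 0` and
`p² - q²·d > 0`, with `(1, y, x, x·y)` a `ℚ`-basis. -/
theorem stmt_0 (K : Type*) [Field K] [NumberField K]
    (hdeg : Module.finrank ℚ K = 4)
    (htc : IsEmpty (K →+* ℝ))
    (d : ℚ) (hd : 1 < d) (hdsq : ¬ ∃ t : ℚ, t ^ 2 = d)
    (y : K) (hy : y ^ 2 = (d : ℚ) • (1 : K)) :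
    ∃ p q : ℚ, p < 0 ∧ 0 < p ^ 2 - q ^ 2 * d ∧
      ∃ x : K, x ^ 2 = p • (1 : K) + q • y ∧
        ∃ B : Module.Basis (Fin 4) ℚ K, ⇑B = ![1, y, x, x * y] := by
  set F := ℚ⟮y⟯
  set η := AdjoinSimple.gen ℚ y
  have hη : η ^ 2 = algebraMap ℚ F d := Subtype.ext (by simp [η, hy])
  have hηF : η ∉ (algebraMap ℚ F).range := fun ⟨t, ht⟩ ↦
    hdsq ⟨t, (algebraMap ℚ F).injective (by rw [map_pow, ht, hη])⟩
  have hF : Module.finrank ℚ F = 2 := by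
    rw [adjoin.finrank (IsIntegral.of_finite ℚ y), ← minpoly_gen]
    exact (congrArg natDegree (minpoly_eq_X_sq_sub_C hηF hη)).trans natDegree_X_pow_sub_C
  have hKF : Module.finrank F K = 2 := by
    have := Module.finrank_mul_finrank ℚ F K
    rw [hF, hdeg] at this
    omega
  obtain ⟨x, hxF, c, hc⟩ := exists_notMem_range_sq_mem_range two_ne_zero hKF
  obtain ⟨p, q, rfl⟩ := exists_smul_one_add_smul_eq_of_finrank_eq_two hF hηF c
  have hneg : ∀ s : ℝ, s ^ 2 = d → p + q * s < 0 := by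
    intro s hs
    by_contra! hnonneg
    obtain ⟨τ₁, hτ₁⟩ := exists_ringHom_apply_eq_of_sq_eq hF hηF hη (Rat.castHom ℝ) (r := s)
      (by simpa using hs)
    obtain ⟨τ, -⟩ := exists_ringHom_apply_eq_of_sq_eq hKF hxF hc.symm τ₁
      (r := √(p + q * s)) (by rw [Real.sq_sqrt hnonneg]; simp [Rat.smul_def, hτ₁])
    exact htc.false τ
  obtain ⟨hp, hpq⟩ := neg_and_sq_sub_sq_mul_pos_of_forall (by exact_mod_cast (zero_lt_one.trans hd).le) hneg
  refine ⟨p, q, by exact_mod_cast hp, by exact_mod_cast hpq, x, by simp [← hc, η], ?_⟩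
  have hli := linearIndependent_tower_of_notMem_range hηF hxF
  have hcard : Fintype.card (Fin 4) = Module.finrank ℚ K := by simp [hdeg]
  exact ⟨basisOfLinearIndependentOfCardEqFinrank hli hcard,
    coe_basisOfLinearIndependentOfCardEqFinrank hli hcard⟩
end

section
/- Let p₁ and p₂ be negative rational numbers such that p₁·p₂ is not a rational square. In ℂ, define the 2×2 complex matrix α = [[i·√(−p₁), 0], [0, i·√(−p₂)]]. Let h be a 2×2 complex Hermitian matrix. Then the three matrices h + hᵀ, αᵀ·h·ᾱ + ᾱᵀ·hᵀ·α, and h·ᾱ + hᵀ·α all have rational entries if and only if there exist rational numbers a₁, a₂ such that h = [[a₁, 0], [0, a₂]]. -/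
open Matrix

/-- A complex matrix has rational entries if every entry is the image of a rational number. -/
def RatEntries (A : Matrix (Fin 2) (Fin 2) ℂ) : Prop :=
  ∀ i j, ∃ r : ℚ, A i j = (r : ℂ)

/-- solution of the rationality conditions on a constant Hermitian metric in
case (A'). -/
theorem stmt_2 (p₁ p₂ : ℚ) (hp₁ : p₁ < 0) (hp₂ : p₂ < 0)
    (hsq : ¬ ∃ t : ℚ, t ^ 2 = p₁ * p₂)
    (α : Matrix (Fin 2) (Fin 2) ℂ)
    (hα : α = !![Complex.I * (Real.sqrt (-(p₁ : ℝ)) : ℂ), 0;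
                 0, Complex.I * (Real.sqrt (-(p₂ : ℝ)) : ℂ)])
    (h : Matrix (Fin 2) (Fin 2) ℂ) (hherm : h.IsHermitian) :
    (RatEntries (h + hᵀ) ∧
     RatEntries (αᵀ * h * α.map (starRingEnd ℂ) + (α.map (starRingEnd ℂ))ᵀ * hᵀ * α) ∧
     RatEntries (h * α.map (starRingEnd ℂ) + hᵀ * α)) ↔
    ∃ a₁ a₂ : ℚ, h = !![(a₁ : ℂ), 0; 0, (a₂ : ℂ)] := by
  subst hα
  set s₁ : ℝ := Real.sqrt (-(p₁:ℝ)) with hs₁def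
  set s₂ : ℝ := Real.sqrt (-(p₂:ℝ)) with hs₂def
  have hp₁' : (0:ℝ) < -(p₁:ℝ) := by exact_mod_cast (neg_pos.mpr hp₁ : (0:ℚ) < -p₁)
  have hp₂' : (0:ℝ) < -(p₂:ℝ) := by exact_mod_cast (neg_pos.mpr hp₂ : (0:ℚ) < -p₂)
  have hs1sq : s₁ ^ 2 = -(p₁:ℝ) := Real.sq_sqrt hp₁'.le
  have hs2sq : s₂ ^ 2 = -(p₂:ℝ) := Real.sq_sqrt hp₂'.le
  have hs₁pos : 0 < s₁ := Real.sqrt_pos.mpr hp₁'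
  have hs₂pos : 0 < s₂ := Real.sqrt_pos.mpr hp₂'
  have key : ∀ q : ℚ, s₁ * s₂ ≠ (q:ℝ) := by
    intro q hq
    apply hsq
    refine ⟨q, ?_⟩
    have : (q:ℝ)^2 = (p₁:ℝ) * p₂ := by rw [← hq, mul_pow, hs1sq, hs2sq]; ring
    exact_mod_cast this
  constructor
  · rintro ⟨H1, H2, H3⟩
    obtain ⟨q1, hq1⟩ := H1 0 0
    obtain ⟨q2, hq2⟩ := H1 1 1
    obtain ⟨q6, hq6⟩ := H1 0 1
    obtain ⟨q3, hq3⟩ := H2 0 1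
    obtain ⟨q4, hq4⟩ := H3 0 1
    obtain ⟨q5, hq5⟩ := H3 1 0
    have hc : h 1 0 = (starRingEnd ℂ) (h 0 1) := (hherm.apply 1 0).symm
    set x : ℝ := (h 0 1).re with hxdef
    set y : ℝ := (h 0 1).im with hydef
    have hb : h 0 1 = (x:ℂ) + (y:ℂ) * Complex.I := (Complex.re_add_im _).symm
    have hcb : h 1 0 = (x:ℂ) - (y:ℂ) * Complex.I := by
      rw [hc, hb]; simp [Complex.conj_ofReal]; ring
    simp [Matrix.mul_apply, Fin.sum_univ_two, Matrix.transpose_apply, Complex.conj_ofReal,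
      Matrix.map_apply, Matrix.vecHead, Matrix.vecTail] at hq1 hq2 hq3 hq4 hq5 hq6
    rw [hb, hcb] at hq3 hq4 hq5 hq6
    have e6 : 2 * x = (q6:ℝ) := by
      have E : ((2 * x : ℝ) : ℂ) = ((q6:ℚ):ℂ) := by push_cast; linear_combination hq6
      exact_mod_cast E
    have e3 : s₁ * s₂ * (2 * x) = (q3:ℝ) := by
      have E : ((s₁ * s₂ * (2 * x) : ℝ) : ℂ) = ((q3:ℚ):ℂ) := by
        push_cast
        linear_combination hq3 + (s₁ * s₂ * 2 * x : ℂ) * Complex.I_sq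
      exact_mod_cast E
    have e4 : 2 * (s₂ * y) = (q4:ℝ) := by
      have E : ((2 * (s₂ * y) : ℝ) : ℂ) = ((q4:ℚ):ℂ) := by
        push_cast
        linear_combination hq4 + (2 * s₂ * y : ℂ) * Complex.I_sq
      exact_mod_cast E
    have e5 : -(2 * (s₁ * y)) = (q5:ℝ) := by
      have E : ((-(2 * (s₁ * y)) : ℝ) : ℂ) = ((q5:ℚ):ℂ) := by
        push_cast
        linear_combination hq5 - (2 * s₁ * y : ℂ) * Complex.I_sq
      exact_mod_cast E
    have hx : x = 0 := by
      by_contra hx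
      have hq6ne : (q6:ℝ) ≠ 0 := by rw [← e6]; intro hh; apply hx; linarith
      apply key (q3 / q6)
      push_cast
      rw [eq_div_iff hq6ne]
      linear_combination e3 - (s₁ * s₂) * e6
    have hy : y = 0 := by
      by_contra hy
      have hq4ne : (q4:ℝ) ≠ 0 := by
        rw [← e4]
        exact mul_ne_zero two_ne_zero (mul_ne_zero hs₂pos.ne' hy)
      apply key (p₂ * q5 / q4)
      push_cast
      rw [eq_div_iff hq4ne]
      linear_combination (-(s₁ * s₂)) * e4 + (2 * s₁ * y) * hs2sq + (p₂:ℝ) * e5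
    have hb0 : h 0 1 = 0 := by rw [hb, hx, hy]; simp
    have hc0 : h 1 0 = 0 := by rw [hc, hb0]; simp
    refine ⟨q1 / 2, q2 / 2, ?_⟩
    have h00 : h 0 0 = ((q1:ℂ)) / 2 := by linear_combination hq1 / 2
    have h11 : h 1 1 = ((q2:ℂ)) / 2 := by linear_combination hq2 / 2
    ext i j
    fin_cases i <;> fin_cases j <;>
      simp [h00, h11, hb0, hc0]
  · rintro ⟨a₁, a₂, rfl⟩
    have hs1c : ((s₁:ℝ):ℂ) ^ 2 = -((p₁:ℚ):ℂ) := by exact_mod_cast congrArg Complex.ofReal hs1sq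
    have hs2c : ((s₂:ℝ):ℂ) ^ 2 = -((p₂:ℚ):ℂ) := by exact_mod_cast congrArg Complex.ofReal hs2sq
    refine ⟨?_, ?_, ?_⟩ <;> intro i j <;> fin_cases i <;> fin_cases j <;>
      simp [Matrix.mul_apply, Fin.sum_univ_two, Matrix.transpose_apply, Matrix.map_apply,
        Matrix.vecHead, Matrix.vecTail, Complex.conj_ofReal, Matrix.cons_vecMul,
        Matrix.vecMul_cons, Matrix.empty_vecMul, Matrix.smul_cons, Matrix.smul_empty,
        Matrix.add_cons, Matrix.tail_cons, Matrix.empty_add_empty, smul_eq_mul,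
        Matrix.vecMul, dotProduct]
    · exact ⟨2 * a₁, by push_cast; ring⟩
    · exact ⟨0, by norm_num⟩
    · exact ⟨0, by norm_num⟩
    · exact ⟨2 * a₂, by push_cast; ring⟩
    · refine ⟨2 * (-p₁) * a₁, ?_⟩
      push_cast
      linear_combination (-2 * (a₁:ℂ) * Complex.I ^ 2) * hs1c + (2 * (a₁:ℂ) * (p₁:ℂ)) * Complex.I_sq
    · exact ⟨0, by norm_num⟩
    · exact ⟨0, by norm_num⟩
    · refine ⟨2 * (-p₂) * a₂, ?_⟩
      push_cast
      linear_combination (-2 * (a₂:ℂ) * Complex.I ^ 2) * hs2c + (2 * (a₂:ℂ) * (p₂:ℂ)) * Complex.I_sq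
    · exact ⟨0, by norm_num⟩
    · exact ⟨0, by norm_num⟩
    · exact ⟨0, by norm_num⟩
    · exact ⟨0, by norm_num⟩
end

section
/- Let p be a negative rational number. In ℂ, define the 2×2 complex matrix α = i·√(−p)·I₂, where I₂ is the identity matrix. Let h be a 2×2 complex Hermitian matrix. Then the three matrices h + hᵀ, αᵀ·h·ᾱ + ᾱᵀ·hᵀ·α, and h·ᾱ + hᵀ·α all have rational entries if and only if there exist rational numbers h₁, h₂, c₁, c₂ such that h = [[h₁, c₁ − c₂·i·√(−p)], [c₁ + c₂·i·√(−p), h₂]]. -/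
open Matrix

/-- solution of the rationality conditions on a constant Hermitian metric in
case (A). -/
theorem stmt_3 (p : ℚ) (hp : p < 0)
    (α : Matrix (Fin 2) (Fin 2) ℂ)
    (hα : α = (Complex.I * (Real.sqrt (-(p : ℝ)) : ℂ)) • (1 : Matrix (Fin 2) (Fin 2) ℂ))
    (h : Matrix (Fin 2) (Fin 2) ℂ) (hherm : h.IsHermitian) :
    (RatEntries (h + hᵀ) ∧
     RatEntries (αᵀ * h * α.map (starRingEnd ℂ) + (α.map (starRingEnd ℂ))ᵀ * hᵀ * α) ∧
     RatEntries (h * α.map (starRingEnd ℂ) + hᵀ * α)) ↔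
    ∃ h₁ h₂ c₁ c₂ : ℚ,
      h = !![(h₁ : ℂ), (c₁ : ℂ) - (c₂ : ℂ) * (Complex.I * (Real.sqrt (-(p : ℝ)) : ℂ));
             (c₁ : ℂ) + (c₂ : ℂ) * (Complex.I * (Real.sqrt (-(p : ℝ)) : ℂ)), (h₂ : ℂ)] := by
  set s : ℝ := Real.sqrt (-(p : ℝ)) with hs_def
  set t : ℂ := Complex.I * (s : ℂ) with ht_def
  have hpR : (0:ℝ) < -(p:ℝ) := by
    have : (p:ℝ) < 0 := by exact_mod_cast hp
    linarith
  have hs2 : (s:ℝ) * s = -(p:ℝ) := Real.mul_self_sqrt hpR.le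
  have ht2 : t * t = (p : ℂ) := by
    rw [ht_def]
    have h2 : ((s:ℝ):ℂ) * ((s:ℝ):ℂ) = ((-(p:ℝ) : ℝ) : ℂ) := by exact_mod_cast congrArg Complex.ofReal hs2
    push_cast at h2 ⊢
    rw [mul_mul_mul_comm, Complex.I_mul_I, h2]; ring
  have hp0 : (p:ℂ) ≠ 0 := by exact_mod_cast hp.ne
  have ht0 : t ≠ 0 := by
    intro h0
    rw [h0, mul_zero] at ht2
    exact hp0 ht2.symm
  have hconjt : (starRingEnd ℂ) t = -t := by
    rw [ht_def]; simp [Complex.conj_ofReal]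
  have hαbar : α.map (starRingEnd ℂ) = (-t) • (1 : Matrix (Fin 2) (Fin 2) ℂ) := by
    rw [hα]
    ext i j
    simp [Matrix.map_apply, Matrix.one_apply, apply_ite (starRingEnd ℂ), hconjt]
  have hIs : Complex.I ^ 2 * ((s:ℝ):ℂ) ^ 2 = (p:ℂ) := by
    linear_combination ht2
  have h10 : h 1 0 = (starRingEnd ℂ) (h 0 1) := (hherm.apply 1 0).symm
  constructor
  · rintro ⟨H1, _, H3⟩
    obtain ⟨r00, hr00⟩ := H1 0 0
    obtain ⟨r11, hr11⟩ := H1 1 1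
    obtain ⟨r01, hr01⟩ := H1 0 1
    obtain ⟨q, hq⟩ := H3 0 1
    simp only [Matrix.add_apply, Matrix.transpose_apply] at hr00 hr11 hr01
    rw [hαbar, hα] at hq
    simp only [Matrix.mul_neg, Matrix.neg_mul, Matrix.add_apply, Matrix.mul_smul, Matrix.smul_mul,
      Matrix.smul_apply, Matrix.mul_one, Matrix.one_mul, mul_one, smul_eq_mul,
      Matrix.transpose_apply, neg_mul, neg_smul, Matrix.neg_apply] at hq
    refine ⟨r00 / 2, r11 / 2, r01 / 2, q / (2 * p), ?_⟩
    have h00 : h 0 0 = ((r00 / 2 : ℚ) : ℂ) := by push_cast; linear_combination hr00 / 2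
    have h11 : h 1 1 = ((r11 / 2 : ℚ) : ℂ) := by push_cast; linear_combination hr11 / 2
    have hc : (starRingEnd ℂ) (h 0 1) = (r01 : ℂ) - h 0 1 := by
      rw [← h10]; linear_combination hr01
    have hq' : t * ((r01:ℂ) - 2 * h 0 1) = (q:ℂ) := by
      rw [h10, hc] at hq
      linear_combination hq
    have key : (p:ℂ) * ((r01:ℂ) - 2 * h 0 1) = (q:ℂ) * t := by
      linear_combination t * hq' - ((r01:ℂ) - 2 * h 0 1) * hIs
    have h2p : (2 * (p:ℂ)) ≠ 0 := mul_ne_zero two_ne_zero hp0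
    have c1 : ((r01 / 2 : ℚ) : ℂ) * 2 = (r01 : ℂ) := by push_cast; ring
    have c2 : ((q / (2 * p) : ℚ) : ℂ) * (2 * (p:ℂ)) = (q : ℂ) := by
      have hq2 : (q / (2 * p)) * (2 * p) = q := div_mul_cancel₀ q (mul_ne_zero two_ne_zero hp.ne)
      calc ((q / (2 * p) : ℚ) : ℂ) * (2 * (p:ℂ)) = (((q / (2 * p)) * (2 * p) : ℚ) : ℂ) := by
            push_cast; ring
        _ = (q : ℂ) := by rw [hq2]
    have h01 : h 0 1 = ((r01 / 2 : ℚ) : ℂ) - ((q / (2 * p) : ℚ) : ℂ) * t := by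
      apply mul_left_cancel₀ h2p
      linear_combination -key - (p:ℂ) * c1 + t * c2
    have h10' : h 1 0 = ((r01 / 2 : ℚ) : ℂ) + ((q / (2 * p) : ℚ) : ℂ) * t := by
      rw [h10, h01, map_sub, _root_.map_mul, hconjt, map_ratCast, map_ratCast]
      ring
    ext i j
    fin_cases i <;> fin_cases j <;>
      simp [h00, h01, h10', h11]
  · rintro ⟨h₁, h₂, c₁, c₂, rfl⟩
    rw [hαbar, hα]
    simp only [Matrix.transpose_neg, Matrix.transpose_smul, Matrix.transpose_one,
      Matrix.smul_mul, Matrix.mul_smul, Matrix.neg_mul, Matrix.mul_neg,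
      Matrix.one_mul, Matrix.mul_one, smul_smul, neg_smul, smul_neg, neg_neg,
      neg_mul, mul_neg]
    refine ⟨?_, ?_, ?_⟩ <;> intro i j <;> fin_cases i <;> fin_cases j <;>
      simp only [Fin.isValue, Fin.zero_eta, Fin.mk_one, Matrix.add_apply, Matrix.smul_apply,
        Matrix.neg_apply, Matrix.transpose_apply, Matrix.cons_val', Matrix.cons_val_zero,
        Matrix.cons_val_one, Matrix.head_cons, Matrix.head_fin_const, Matrix.empty_val',
        Matrix.cons_val_fin_one, Matrix.of_apply, smul_eq_mul]
    · exact ⟨2 * h₁, by push_cast; ring⟩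
    · exact ⟨2 * c₁, by push_cast; ring⟩
    · exact ⟨2 * c₁, by push_cast; ring⟩
    · exact ⟨2 * h₂, by push_cast; ring⟩
    · exact ⟨-(2 * p * h₁), by push_cast; linear_combination (-2 * (h₁:ℂ)) * hIs⟩
    · exact ⟨-(2 * p * c₁), by push_cast; linear_combination (-2 * (c₁:ℂ)) * hIs⟩
    · exact ⟨-(2 * p * c₁), by push_cast; linear_combination (-2 * (c₁:ℂ)) * hIs⟩
    · exact ⟨-(2 * p * h₂), by push_cast; linear_combination (-2 * (h₂:ℂ)) * hIs⟩
    · exact ⟨0, by push_cast; ring⟩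
    · exact ⟨2 * c₂ * p, by push_cast; linear_combination (2 * (c₂:ℂ)) * hIs⟩
    · exact ⟨-(2 * c₂ * p), by push_cast; linear_combination (-2 * (c₂:ℂ)) * hIs⟩
    · exact ⟨0, by push_cast; ring⟩
end

section
/- Let p, h₁, h₂, c₁, c₂, h₁ᴮ, h₂ᴮ, c₁ᴮ, c₂ᴮ be rational numbers with h₁ ≠ 0 and h₁ᴮ·c₁ − h₁·c₁ᴮ ≠ 0. Let Ω be the alternating 4×4 rational matrix with zero diagonal and above-diagonal entries Ω₁₂ = c₂, Ω₁₃ = h₁, Ω₁₄ = c₁, Ω₂₃ = c₁, Ω₂₄ = h₂, Ω₃₄ = −p·c₂ (and Ωⱼᵢ = −Ωᵢⱼ), and let 𝔅 be the alternating matrix defined in the same way with (h₁ᴮ, h₂ᴮ, c₁ᴮ, c₂ᴮ) in place of (h₁, h₂, c₁, c₂). Set t = (h₁ᴮ·c₂ − h₁·c₂ᴮ)/(h₁ᴮ·c₁ − h₁·c₁ᴮ) and s = c₂/h₁ − (c₁/h₁)·t, and let v₁ = e₁ and v₂ = e₂ − s·e₃ − t·e₄, where e₁, e₂, e₃, e₄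 is the standard basis of ℚ⁴. Then v₁ᵀ·Ω·v₂ = 0 and v₁ᵀ·𝔅·v₂ = 0; hence both alternating bilinear forms vanish identically on the plane spanned by v₁ and v₂. -/
open Matrix

/-- in case (A) with `h₁ᴮ·c₁ − h₁·c₁ᴮ ≠ 0`, the plane spanned by `v₁, v₂`
is isotropic for both the Kähler form `Ω` and the B-field `𝔅`. -/
theorem stmt_4 (p h₁ h₂ c₁ c₂ hB₁ hB₂ cB₁ cB₂ : ℚ)
    (hh₁ : h₁ ≠ 0) (hden : hB₁ * c₁ - h₁ * cB₁ ≠ 0)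
    (Ω 𝔅 : Matrix (Fin 4) (Fin 4) ℚ)
    (hΩ : Ω = !![0, c₂, h₁, c₁;
                 -c₂, 0, c₁, h₂;
                 -h₁, -c₁, 0, -(p * c₂);
                 -c₁, -h₂, p * c₂, 0])
    (h𝔅 : 𝔅 = !![0, cB₂, hB₁, cB₁;
                 -cB₂, 0, cB₁, hB₂;
                 -hB₁, -cB₁, 0, -(p * cB₂);
                 -cB₁, -hB₂, p * cB₂, 0])
    (t s : ℚ)
    (ht : t = (hB₁ * c₂ - h₁ * cB₂) / (hB₁ * c₁ - h₁ * cB₁))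
    (hs : s = c₂ / h₁ - (c₁ / h₁) * t)
    (v₁ v₂ : Fin 4 → ℚ)
    (hv₁ : v₁ = ![1, 0, 0, 0])
    (hv₂ : v₂ = ![0, 1, -s, -t]) :
    v₁ ⬝ᵥ Ω *ᵥ v₂ = 0 ∧ v₁ ⬝ᵥ 𝔅 *ᵥ v₂ = 0 ∧
    ∀ u w : Fin 4 → ℚ, u ∈ Submodule.span ℚ {v₁, v₂} → w ∈ Submodule.span ℚ {v₁, v₂} →
      u ⬝ᵥ Ω *ᵥ w = 0 ∧ u ⬝ᵥ 𝔅 *ᵥ w = 0 := by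
  have hTd : t * (hB₁ * c₁ - h₁ * cB₁) = hB₁ * c₂ - h₁ * cB₂ := by
    rw [ht]; field_simp
  have hSd : s * h₁ = c₂ - c₁ * t := by
    rw [hs]; field_simp
  clear ht hs
  have hBs : hB₁ * s = cB₂ - cB₁ * t := by
    apply mul_left_cancel₀ hh₁
    linear_combination hB₁ * hSd - hTd
  subst hΩ h𝔅 hv₁ hv₂
  have hΩ0 : (![(1:ℚ),0,0,0] ⬝ᵥ !![0, c₂, h₁, c₁;
                 -c₂, 0, c₁, h₂;
                 -h₁, -c₁, 0, -(p * c₂);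
                 -c₁, -h₂, p * c₂, 0] *ᵥ ![0,1,-s,-t]) = 0 := by
    simp [dotProduct, mulVec, Fin.sum_univ_four]
    linear_combination -hSd
  have h𝔅0 : (![(1:ℚ),0,0,0] ⬝ᵥ !![0, cB₂, hB₁, cB₁;
                 -cB₂, 0, cB₁, hB₂;
                 -hB₁, -cB₁, 0, -(p * cB₂);
                 -cB₁, -hB₂, p * cB₂, 0] *ᵥ ![0,1,-s,-t]) = 0 := by
    simp [dotProduct, mulVec, Fin.sum_univ_four]
    linear_combination -hBs
  refine ⟨hΩ0, h𝔅0, ?_⟩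
  intro u w hu hw
  obtain ⟨a, b, rfl⟩ := Submodule.mem_span_pair.mp hu
  obtain ⟨c, d, rfl⟩ := Submodule.mem_span_pair.mp hw
  have gen : ∀ M : Matrix (Fin 4) (Fin 4) ℚ,
      (![(1:ℚ),0,0,0] ⬝ᵥ M *ᵥ ![0,1,-s,-t]) = 0 →
      (![(0:ℚ),1,-s,-t] ⬝ᵥ M *ᵥ ![1,0,0,0]) = 0 →
      (![(1:ℚ),0,0,0] ⬝ᵥ M *ᵥ ![1,0,0,0]) = 0 →
      (![(0:ℚ),1,-s,-t] ⬝ᵥ M *ᵥ ![0,1,-s,-t]) = 0 →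
      ((a • ![(1:ℚ),0,0,0] + b • ![0,1,-s,-t]) ⬝ᵥ M *ᵥ (c • ![(1:ℚ),0,0,0] + d • ![0,1,-s,-t])) = 0 := by
    intro M h12 h21 h11 h22
    simp only [mulVec_add, mulVec_smul, dotProduct_add, dotProduct_smul,
      add_dotProduct, smul_dotProduct, smul_eq_mul, h12, h21, h11, h22,
      mul_zero, add_zero]
  refine ⟨gen _ hΩ0 ?_ ?_ ?_, gen _ h𝔅0 ?_ ?_ ?_⟩
  · simp [dotProduct, mulVec, Fin.sum_univ_four]; linear_combination hSd
  · simp [dotProduct, mulVec, Fin.sum_univ_four]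
  · simp [dotProduct, mulVec, Fin.sum_univ_four]; ring
  · simp [dotProduct, mulVec, Fin.sum_univ_four]
    linear_combination hBs
  · simp [dotProduct, mulVec, Fin.sum_univ_four]
  · simp [dotProduct, mulVec, Fin.sum_univ_four]; ring
end

section
/- Let d, d', p be rational numbers such that neither d nor d' is a rational square. Let B, C, D, B̃, C̃, D̃ be rational numbers satisfying the four equations: d·B·C = B̃·C̃; d·B·D = B̃·D̃; d·(D²·d' − C²) = D̃²·d' − C̃²; and d·(d'·(B² − 2·C·D) + p·(C² + d'·D²)) = d'·(B̃² − 2·C̃·D̃) + p·(C̃² + d'·D̃²). If it is not the case that C = 0 and D = 0, then B = 0 and B̃ = 0. -/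
lemma aux_not_sq (d' C D : ℚ) (hd' : ¬ ∃ t : ℚ, t ^ 2 = d')
    (h : D ^ 2 * d' - C ^ 2 = 0) : C = 0 ∧ D = 0 := by
  by_cases hD : D = 0
  · subst hD
    constructor
    · nlinarith [sq_nonneg C]
    · rfl
  · exact absurd ⟨C / D, by field_simp; nlinarith⟩ hd'

/-- in the converse analysis for case (B, C), the polarization-compatibility
conditions force the B-field parameters `B` and `B̃` to vanish. -/
theorem stmt_6 (d d' p : ℚ)
    (hdsq : ¬ ∃ t : ℚ, t ^ 2 = d) (hd'sq : ¬ ∃ t : ℚ, t ^ 2 = d')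
    (B C D Bt Ct Dt : ℚ)
    (h1 : d * B * C = Bt * Ct)
    (h2 : d * B * D = Bt * Dt)
    (h3 : d * (D ^ 2 * d' - C ^ 2) = Dt ^ 2 * d' - Ct ^ 2)
    (h4 : d * (d' * (B ^ 2 - 2 * C * D) + p * (C ^ 2 + d' * D ^ 2)) =
          d' * (Bt ^ 2 - 2 * Ct * Dt) + p * (Ct ^ 2 + d' * Dt ^ 2))
    (hCD : ¬ (C = 0 ∧ D = 0)) :
    B = 0 ∧ Bt = 0 := by
  have hd0 : d ≠ 0 := fun h => hdsq ⟨0, by simp [h]⟩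
  have hB : B = 0 := by
    by_contra hB
    have hBt : Bt ≠ 0 := by
      intro hBt
      rw [hBt, zero_mul] at h1 h2
      exact hCD ⟨by
        have := mul_eq_zero.mp h1
        rcases this with h | h
        · exact absurd ((mul_eq_zero.mp h).resolve_left hd0) hB
        · exact h, by
        have := mul_eq_zero.mp h2
        rcases this with h | h
        · exact absurd ((mul_eq_zero.mp h).resolve_left hd0) hB
        · exact h⟩
    have key : d * (D ^ 2 * d' - C ^ 2) * Bt ^ 2 = d ^ 2 * B ^ 2 * (D ^ 2 * d' - C ^ 2) := by
      linear_combination Bt ^ 2 * h3 - d' * (d * B * D + Bt * Dt) * h2 + (d * B * C + Bt * Ct) * h1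
    by_cases hS : D ^ 2 * d' - C ^ 2 = 0
    · exact hCD (aux_not_sq d' C D hd'sq hS)
    · have hdsq' : d = (Bt / B) ^ 2 := by
        have h5 : d * Bt ^ 2 = d ^ 2 * B ^ 2 := by
          have := mul_right_cancel₀ hS (by linarith [key] : d * Bt ^ 2 * (D ^ 2 * d' - C ^ 2) = d ^ 2 * B ^ 2 * (D ^ 2 * d' - C ^ 2))
          exact this
        have h6 : Bt ^ 2 = d * B ^ 2 := mul_left_cancel₀ hd0 (by linear_combination h5)
        field_simp
        linarith [h6]
      exact hdsq ⟨Bt / B, hdsq'.symm⟩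
  refine ⟨hB, ?_⟩
  by_contra hBt
  rw [hB, mul_zero, zero_mul] at h1 h2
  have hCt : Ct = 0 := ((mul_eq_zero.mp h1.symm).resolve_left hBt)
  have hDt : Dt = 0 := ((mul_eq_zero.mp h2.symm).resolve_left hBt)
  rw [hCt, hDt] at h3
  have hS : D ^ 2 * d' - C ^ 2 = 0 := by
    have : d * (D ^ 2 * d' - C ^ 2) = 0 := by rw [h3]; ring
    exact (mul_eq_zero.mp this).resolve_left hd0
  exact hCD (aux_not_sq d' C D hd'sq hS)
end

section
/- Let d be a rational number that is not a rational square. If C', D', C̃', D̃' are rational numbers with D'·C' = C̃'·D̃' and d·C'² + D'² = d·D̃'² + C̃'², then either (C̃', D̃') = (D', C') or (C̃', D̃') = (−D', −C'). -/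
/-- rational solutions of the coupled quadratic equations for the Kähler
parameters in case (B, C). -/
theorem stmt_7 (d : ℚ) (hdsq : ¬ ∃ t : ℚ, t ^ 2 = d)
    (C' D' Ct' Dt' : ℚ)
    (h1 : D' * C' = Ct' * Dt')
    (h2 : d * C' ^ 2 + D' ^ 2 = d * Dt' ^ 2 + Ct' ^ 2) :
    (Ct' = D' ∧ Dt' = C') ∨ (Ct' = -D' ∧ Dt' = -C') := by
  have key : Dt' ^ 2 = C' ^ 2 := by
    by_contra hne
    have hden : C' ^ 2 - Dt' ^ 2 ≠ 0 := fun h => hne (by linarith)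
    apply hdsq
    refine ⟨((Ct' + D') * (C' - Dt')) / (C' ^ 2 - Dt' ^ 2), ?_⟩
    rw [div_pow, div_eq_iff (pow_ne_zero 2 hden)]
    linear_combination 2 * (Ct' + D') * (C' - Dt') * h1 - (C' ^ 2 - Dt' ^ 2) * h2
  have hcase : Dt' = C' ∨ Dt' = -C' := by
    have : (Dt' - C') * (Dt' + C') = 0 := by ring_nf; linarith [key]
    rcases mul_eq_zero.mp this with h | h
    · left; linarith
    · right; linarith
  by_cases hC : C' = 0
  · subst hC
    have hDt : Dt' = 0 := by rcases hcase with h | h <;> simpa using h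
    subst hDt
    have : (Ct' - D') * (Ct' + D') = 0 := by nlinarith [h2]
    rcases mul_eq_zero.mp this with h | h
    · left; constructor <;> linarith
    · right; constructor <;> [linarith; norm_num]
  · rcases hcase with h | h
    · left
      refine ⟨?_, h⟩
      have := h1
      rw [h] at this
      exact (mul_right_cancel₀ hC this.symm)
    · right
      refine ⟨?_, h⟩
      have h1' : D' * C' = (-Ct') * C' := by rw [h1, h]; ring
      have := mul_right_cancel₀ hC h1'
      linarith
end

section
/- Let d, p, q, C', D' be rational numbers with d > 0, d' := p² − q²·d > 0, d' not a rational square, and (C', D') ≠ (0, 0). Define the real numbers a = −(p·C' + q·D')/(2·√d') and b = (q·d·C' + p·D')/(2·d·√d'). Then it is not the case that both a and b are rational (i.e., at least one of a, b does not lie in the range of the coercion ℚ → ℝ). -/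
/-- in the second kind of solution for case (B, C), the fitted Kähler
parameters `a`, `b` are not both rational. -/
theorem stmt_9 (d p q C' D' : ℚ) (hd : 0 < d)
    (hd'pos : 0 < p ^ 2 - q ^ 2 * d)
    (hd'sq : ¬ ∃ t : ℚ, t ^ 2 = p ^ 2 - q ^ 2 * d)
    (hCD : ¬ (C' = 0 ∧ D' = 0))
    (a b : ℝ)
    (ha : a = -((p : ℝ) * (C' : ℝ) + (q : ℝ) * (D' : ℝ)) /
        (2 * Real.sqrt ((p ^ 2 - q ^ 2 * d : ℚ) : ℝ)))
    (hb : b = ((q : ℝ) * (d : ℝ) * (C' : ℝ) + (p : ℝ) * (D' : ℝ)) /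
        (2 * (d : ℝ) * Real.sqrt ((p ^ 2 - q ^ 2 * d : ℚ) : ℝ))) :
    ¬ ((∃ r : ℚ, (r : ℝ) = a) ∧ (∃ r : ℚ, (r : ℝ) = b)) := by
  rintro ⟨⟨ra, hra⟩, ⟨rb, hrb⟩⟩
  set s : ℝ := Real.sqrt ((p ^ 2 - q ^ 2 * d : ℚ) : ℝ) with hsdef
  have hd'R : (0 : ℝ) < ((p ^ 2 - q ^ 2 * d : ℚ) : ℝ) := by exact_mod_cast hd'pos
  have hspos : 0 < s := Real.sqrt_pos.2 hd'R
  have hs2 : s ^ 2 = ((p ^ 2 - q ^ 2 * d : ℚ) : ℝ) := Real.sq_sqrt hd'R.le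
  have hirr : ∀ t : ℚ, (t : ℝ) ≠ s := by
    intro t ht
    apply hd'sq
    refine ⟨t, ?_⟩
    have : ((t : ℝ)) ^ 2 = ((p ^ 2 - q ^ 2 * d : ℚ) : ℝ) := by rw [ht]; exact hs2
    exact_mod_cast this
  have hdR : (0 : ℝ) < (d : ℝ) := by exact_mod_cast hd
  -- numerator equations
  have hA : (ra : ℝ) * (2 * s) = -((p : ℝ) * C' + q * D') := by
    rw [hra, ha]
    field_simp
  have hB : (rb : ℝ) * (2 * (d : ℝ) * s) = (q : ℝ) * d * C' + p * D' := by
    rw [hrb, hb]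
    field_simp
  have hra0 : ra = 0 := by
    by_contra h
    apply hirr (-(p * C' + q * D') / (2 * ra))
    have h2 : ((2 : ℝ) * ra) ≠ 0 := by
      have : (ra : ℝ) ≠ 0 := by exact_mod_cast h
      positivity
    push_cast
    field_simp
    linarith [hA]
  have hrb0 : rb = 0 := by
    by_contra h
    apply hirr ((q * d * C' + p * D') / (2 * d * rb))
    have h2 : ((2 : ℝ) * d * rb) ≠ 0 := by
      have : (rb : ℝ) ≠ 0 := by exact_mod_cast h
      positivity
    push_cast
    field_simp
    nlinarith [hB]
  rw [hra0] at hA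
  rw [hrb0] at hB
  norm_num at hA hB
  have hAq : p * C' + q * D' = 0 := by
    have : ((p * C' + q * D' : ℚ) : ℝ) = 0 := by push_cast; linarith
    exact_mod_cast this
  have hBq : q * d * C' + p * D' = 0 := by
    have : ((q * d * C' + p * D' : ℚ) : ℝ) = 0 := by push_cast; linarith
    exact_mod_cast this
  have hp : p ≠ 0 := by
    intro h
    rw [h] at hd'pos
    nlinarith [sq_nonneg q, hd.le, mul_nonneg (sq_nonneg q) hd.le]
  have hC : C' = 0 := by
    have hdet : (p ^ 2 - q ^ 2 * d) * C' = 0 := by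
      linear_combination p * hAq - q * hBq
    exact (mul_eq_zero.1 hdet).resolve_left hd'pos.ne'
  have hD : D' = 0 := by
    have hpd : p * D' = 0 := by rw [hC] at hBq; linarith
    exact (mul_eq_zero.1 hpd).resolve_left hp
  exact hCD ⟨hC, hD⟩
end

section
/- Let p₁ be a negative rational number and p₂ any rational number. Suppose B, C, D, B̃, C̃, D̃ are rational numbers satisfying B·B̃ + p₁·D·D̃ = 0, B·D̃ + B̃·D = 0, p₂·B·B̃ + C·C̃ = 0, and B·C̃ + B̃·C = 0. If it is not the case that C = 0 and D = 0, and it is not the case that C̃ = 0 and D̃ = 0, then B = 0, B̃ = 0, D·D̃ = 0 and C·C̃ = 0. -/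
/-- in the converse analysis for case (A'), excluding the zero-volume
configurations, the B-field parameters vanish and the conditions reduce to
`D·D̃ = 0` and `C·C̃ = 0`. -/
theorem stmt_10 (p₁ p₂ : ℚ) (hp₁ : p₁ < 0)
    (B C D Bt Ct Dt : ℚ)
    (h1 : B * Bt + p₁ * D * Dt = 0)
    (h2 : B * Dt + Bt * D = 0)
    (h3 : p₂ * B * Bt + C * Ct = 0)
    (h4 : B * Ct + Bt * C = 0)
    (hCD : ¬ (C = 0 ∧ D = 0)) (hCDt : ¬ (Ct = 0 ∧ Dt = 0)) :
    B = 0 ∧ Bt = 0 ∧ D * Dt = 0 ∧ C * Ct = 0 := by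
  have hB : B = 0 := by
    by_contra hB
    have key : Bt * (B ^ 2 - p₁ * D ^ 2) = 0 := by linear_combination B * h1 - p₁ * D * h2
    have hpos : B ^ 2 - p₁ * D ^ 2 > 0 := by nlinarith [sq_nonneg B, sq_nonneg D, sq_pos_of_ne_zero hB]
    have hBt : Bt = 0 := by
      rcases mul_eq_zero.mp key with h | h
      · exact h
      · exact absurd h (ne_of_gt hpos)
    have hDt : Dt = 0 := by
      have := h2; rw [hBt] at this; simpa [hB] using this
    have hCt : Ct = 0 := by
      have := h4; rw [hBt] at this; simpa [hB] using this
    exact hCDt ⟨hCt, hDt⟩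
  have hBt : Bt = 0 := by
    by_contra hBt
    have hD : D = 0 := by
      have := h2; rw [hB] at this; simpa [hBt] using this
    have hC : C = 0 := by
      have := h4; rw [hB] at this; simpa [hBt] using this
    exact hCD ⟨hC, hD⟩
  refine ⟨hB, hBt, ?_, ?_⟩
  · have := h1; rw [hB] at this
    have : p₁ * (D * Dt) = 0 := by linarith [this]
    rcases mul_eq_zero.mp this with h | h
    · exact absurd h (ne_of_lt hp₁)
    · exact h
  · have := h3; rw [hB] at this; simpa using this
end

section
/- Let d be a rational number that is not a rational square, and let V be a commutative ℚ-algebra containing elements x and y with y² = d·1, such that the family (1, y, x, x·y) is a ℚ-basis of V. Let Ã, A, D', C' be rational numbers with (C', D') ≠ (0, 0), and set Ξ = Ã·1 + A·y + D'·x + C'·(x·y). Then the family (1, y, Ξ, Ξ·y) is also a ℚ-basis of V. -/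
/-!
Since `y² = d`, multiplication by `y` sends `Ξ = (Ã + A y) + (D' + C' y) x` to
`A d + Ã y + C' d x + D' x y`. In the basis `(1, y, x, x y)` the change-of-basis matrix to
`(1, y, Ξ, Ξ y)` is therefore block upper triangular, with lower-right block
`[[D', C' d], [C', D']]`, so its determinant is the norm `D'² - d C'²` of `D' + C' y` from
`ℚ(√d)`. This is nonzero because `d` is not a square and `(C', D') ≠ (0, 0)`.
-/

theorem sq_sub_mul_sq_ne_zero {K : Type*} [Field K] {d : K} (hd : ¬∃ t : K, t ^ 2 = d)
    {a b : K} (hab : ¬(b = 0 ∧ a = 0)) : a ^ 2 - d * b ^ 2 ≠ 0 := by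
  intro h
  rcases eq_or_ne b 0 with rfl | hb
  · exact hab ⟨rfl, by simpa using h⟩
  · exact hd ⟨a / b, by field_simp; linear_combination h⟩

theorem Module.Basis.toMatrix_eq_of_eq_sum {ι R M : Type*} [Fintype ι]
    [CommRing R] [AddCommGroup M] [Module R M] (b : Module.Basis ι R M) {v : ι → M}
    (P : Matrix ι ι R) (hv : ∀ j, v j = ∑ i, P i j • b i) : b.toMatrix v = P := by
  ext i j
  rw [Module.Basis.toMatrix_apply, hv, b.repr_sum_self]

theorem Module.Basis.exists_basis_of_isUnit_det_toMatrix {ι R M : Type*} [Fintype ι]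
    [DecidableEq ι] [CommRing R] [AddCommGroup M] [Module R M] (b : Module.Basis ι R M)
    {v : ι → M} (hv : IsUnit (b.toMatrix v).det) : ∃ b' : Module.Basis ι R M, ⇑b' = v := by
  obtain ⟨hli, hspan⟩ := b.is_basis_iff_det.mpr (by rwa [Module.Basis.det_apply])
  exact ⟨.mk hli hspan.ge, Module.Basis.coe_mk _ _⟩

theorem det_fin_four_quadraticBlock {R : Type*} [CommRing R] (a b c e d : R) :
    (!![1, 0, a, b * d; 0, 1, b, a; 0, 0, e, c * d; 0, 0, c, e] : Matrix (Fin 4) (Fin 4) R).det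
      = e ^ 2 - d * c ^ 2 := by
  simp [Matrix.det_succ_row_zero, Fin.sum_univ_succ]
  ring

theorem mul_right_of_sq_eq_smul_one {K V : Type*} [CommRing K] [CommRing V] [Algebra K V]
    {d : K} {x y : V}
    (hy : y ^ 2 = d • (1 : V)) (a b e c : K) :
    (a • 1 + b • y + e • x + c • (x * y)) * y
      = (b * d) • 1 + a • y + (c * d) • x + e • (x * y) := by
  have hyy : y * y = d • (1 : V) := by rw [← sq, hy]
  simp only [add_mul, smul_mul_assoc, one_mul, mul_assoc, hyy, mul_smul_comm, mul_one]
  module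

/-- if `(1, y, x, x·y)` is a `ℚ`-basis of the commutative `ℚ`-algebra `V` with
`y² = d` (`d` not a rational square) and `Ξ = Ã + A·y + D'·x + C'·x·y` with
`(C', D') ≠ (0, 0)`, then `(1, y, Ξ, Ξ·y)` is also a `ℚ`-basis. -/
theorem stmt_11 (d : ℚ) (hdsq : ¬ ∃ t : ℚ, t ^ 2 = d)
    (V : Type*) [CommRing V] [Algebra ℚ V]
    (x y : V) (hy : y ^ 2 = d • (1 : V))
    (B : Module.Basis (Fin 4) ℚ V) (hB : ⇑B = ![1, y, x, x * y])
    (At A D' C' : ℚ) (hCD : ¬ (C' = 0 ∧ D' = 0))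
    (Ξ : V) (hΞ : Ξ = At • (1 : V) + A • y + D' • x + C' • (x * y)) :
    ∃ B' : Module.Basis (Fin 4) ℚ V, ⇑B' = ![1, y, Ξ, Ξ * y] := by
  have hmatrix : B.toMatrix ![1, y, Ξ, Ξ * y]
      = !![1, 0, At, A * d; 0, 1, A, At; 0, 0, D', C' * d; 0, 0, C', D'] := by
    refine B.toMatrix_eq_of_eq_sum _ fun j => ?_
    fin_cases j <;> simp [Fin.sum_univ_four, hB, hΞ, mul_right_of_sq_eq_smul_one hy]
  apply B.exists_basis_of_isUnit_det_toMatrix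
  rw [hmatrix, det_fin_four_quadraticBlock, isUnit_iff_ne_zero]
  exact sq_sub_mul_sq_ne_zero hdsq hCD
end
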